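/- Let I be a lower ideal of Δ(1) and let w = w_{I,min} ∈ W⁰ be the unique element with N(w) = ⟨I⟩. For γ ∈ Δ(1), one has γ ∈ max(I) (i.e., γ is a maximal element of I in the poset Δ(1)) if and only if w(γ) ∈ −Π, where Π is the set of simple roots of Δ. -/

import Mathlib

open RealInnerProductSpace

variable {V : Type*} [NormedAddCommGroup V] [InnerProductSpace ℝ V] [FiniteDimensional ℝ V]

/-- The orthogonal reflection in the hyperplane orthogonal to `α`. -/
noncomputable def sref (α : V) : V ≃ₗ[ℝ] V :=
  (Submodule.reflection ((ℝ ∙ α)ᗮ)).toLinearEquiv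

/-- `Δ` is an (irreducible, crystallographic, reduced) root system, equipped with a
`ℤ`-grading `d` (so that `Δ(i) = {γ ∈ Δ | d γ = i}`) and a compatible set `Pos = Δ⁺`
of positive roots (compatibility: every root of level `≥ 1` is positive). -/
structure GradedRootSystem (Δ : Set V) (d : V → ℤ) (Pos : Set V) : Prop where
  finite : Δ.Finite
  span_top : Submodule.span ℝ Δ = ⊤
  nonzero : ∀ α ∈ Δ, α ≠ 0
  neg_mem : ∀ α ∈ Δ, -α ∈ Δ
  reduced : ∀ α ∈ Δ, ∀ c : ℝ, c • α ∈ Δ → c = 1 ∨ c = -1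
  reflect_mem : ∀ α ∈ Δ, ∀ β ∈ Δ, β - (2 * ⟪β, α⟫ / ⟪α, α⟫) • α ∈ Δ
  crystallographic : ∀ α ∈ Δ, ∀ β ∈ Δ, ∃ n : ℤ, (n : ℝ) = 2 * ⟪β, α⟫ / ⟪α, α⟫
  irreducible : ∀ Δ₁ Δ₂ : Set V, Δ = Δ₁ ∪ Δ₂ → (∀ a ∈ Δ₁, ∀ b ∈ Δ₂, ⟪a, b⟫ = 0) →
    Δ₁ = ∅ ∨ Δ₂ = ∅
  grade_add : ∀ γ₁ ∈ Δ, ∀ γ₂ ∈ Δ, γ₁ + γ₂ ∈ Δ → d (γ₁ + γ₂) = d γ₁ + d γ₂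
  grade_neg : ∀ γ ∈ Δ, d (-γ) = - d γ
  pos_subset : Pos ⊆ Δ
  pos_iff : ∀ γ ∈ Δ, (γ ∈ Pos ↔ -γ ∉ Pos)
  pos_add : ∀ γ₁ ∈ Pos, ∀ γ₂ ∈ Pos, γ₁ + γ₂ ∈ Δ → γ₁ + γ₂ ∈ Pos
  compatible : ∀ γ ∈ Δ, 1 ≤ d γ → γ ∈ Pos

/-- The level set `Δ(i)` of the grading. -/
def level (Δ : Set V) (d : V → ℤ) (i : ℤ) : Set V := {γ ∈ Δ | d γ = i}

/-- `Δ(≥ k)`. -/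
def levelGE (Δ : Set V) (d : V → ℤ) (k : ℤ) : Set V := {γ ∈ Δ | k ≤ d γ}

/-- `Δ(≤ k)`. -/
def levelLE (Δ : Set V) (d : V → ℤ) (k : ℤ) : Set V := {γ ∈ Δ | d γ ≤ k}

/-- `Δ(0)⁺`, the positive part of `Δ(0)`. -/
def pos0 (d : V → ℤ) (Pos : Set V) : Set V := {γ ∈ Pos | d γ = 0}

/-- The simple roots of a positive system `P`: positive roots that are not the sum
of two positive roots. -/
def simpleRoots (P : Set V) : Set V := {γ ∈ P | ¬ ∃ a ∈ P, ∃ b ∈ P, γ = a + b}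

/-- `idealPow Δ I k = I^k`, with `I¹ = I` and `I^{k+1} = (I + I^k) ∩ Δ`
(and `I⁰ = ∅` by convention). -/
def idealPow (Δ I : Set V) : ℕ → Set V
  | 0 => ∅
  | 1 => I
  | (k+2) => {x ∈ Δ | ∃ a ∈ I, ∃ b ∈ idealPow Δ I (k+1), x = a + b}

/-- `⟨I⟩ = ⋃_{k ≥ 1} I^k`. -/
def gen (Δ I : Set V) : Set V := ⋃ k : ℕ, idealPow Δ I (k+1)

/-- A subset `M` of roots is closed if it is closed under root addition. -/
def IsClosedSubset (Δ M : Set V) : Prop :=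
  ∀ γ₁ ∈ M, ∀ γ₂ ∈ M, γ₁ + γ₂ ∈ Δ → γ₁ + γ₂ ∈ M

/-- Bi-convexity of `M ⊆ Δ⁺`: both `M` and `Δ⁺ \ M` are closed. -/
def IsBiConvex (Δ Pos M : Set V) : Prop :=
  IsClosedSubset Δ M ∧ IsClosedSubset Δ (Pos \ M)

/-- The partial order on each level `Δ(i)`: `γ' ≼ γ` iff `γ - γ'` is a nonnegative
integral combination of the simple roots `Π(0)` of `Δ(0)⁺`. -/
def leLevel (d : V → ℤ) (Pos : Set V) (γ' γ : V) : Prop :=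
  γ - γ' ∈ AddSubmonoid.closure (simpleRoots (pos0 d Pos))

/-- A lower ideal of the weight poset `Δ(i)`. -/
def IsLowerIdeal (Δ : Set V) (d : V → ℤ) (Pos : Set V) (i : ℤ) (I : Set V) : Prop :=
  I ⊆ level Δ d i ∧ ∀ γ ∈ I, ∀ ν ∈ level Δ d i, leLevel d Pos ν γ → ν ∈ I

/-- An upper ideal of the weight poset `Δ(i)`. -/
def IsUpperIdeal (Δ : Set V) (d : V → ℤ) (Pos : Set V) (i : ℤ) (I : Set V) : Prop :=
  I ⊆ level Δ d i ∧ ∀ γ ∈ I, ∀ ν ∈ level Δ d i, leLevel d Pos γ ν → ν ∈ I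

/-- The Weyl group of the set of roots `S`: the subgroup of `GL(V)` generated by the
reflections `s_α`, `α ∈ S`. -/
noncomputable def weyl (S : Set V) : Subgroup (V ≃ₗ[ℝ] V) :=
  Subgroup.closure {g | ∃ α ∈ S, g = sref α}

/-- The inversion set `N(w) = {γ ∈ Δ⁺ | -w(γ) ∈ Δ⁺}`. -/
def invSet (Pos : Set V) (w : V ≃ₗ[ℝ] V) : Set V := {γ ∈ Pos | -(w γ) ∈ Pos}

/-- `W⁰`, the minimal length coset representatives of `W/W(0)`:
elements of `W` sending `Δ(0)⁺` into `Δ⁺`. -/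
noncomputable def W0 (Δ : Set V) (d : V → ℤ) (Pos : Set V) : Set (V ≃ₗ[ℝ] V) :=
  {w | w ∈ weyl Δ ∧ ∀ γ ∈ pos0 d Pos, w γ ∈ Pos}

/-!
If `γ ∈ I` is not maximal, some `ν ∈ I` exceeds it by a nonempty sum of positive roots of `Δ(0)`,
which `w ∈ W⁰` keeps positive; then `-w γ = -w ν + w (ν - γ)` is a sum of at least two positive
roots, and such a root is never simple.

Conversely, let `γ` be maximal and suppose `-w γ = a + b` with `a, b ∈ Δ⁺`. Then `γ = u + v` with
`w u = -a`, `w v = -b`; comparing levels, exactly one of `u, v` is positive, say `u`, so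
`u ∈ N(w) = ⟨I⟩` and `u = γ + η` with `w η = b ∈ Δ⁺`. Writing `u = δ + ε` with `δ ∈ I`,
`ε ∈ I^k`, positivity of `⟪u, u⟫` makes `δ - γ` or `η - δ` a root. The first contradicts the
maximality of `γ` or the positivity of `w η`; the second gives `γ + (η - δ) = ε`, one power lower.
-/

set_option linter.unusedSectionVars false

theorem sref_apply (α β : V) : sref α β = β - (2 * ⟪β, α⟫ / ⟪α, α⟫) • α := by
  rw [sref, LinearIsometryEquiv.coe_toLinearEquiv, Submodule.reflection_orthogonal_apply,
    Submodule.reflection_singleton_apply, real_inner_self_eq_norm_sq, real_inner_comm]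
  match_scalars <;> simp [mul_div_assoc]

theorem exists_mem_inner_pos_of_inner_sum_pos {x : V} {l : List V} (hl : 0 < ⟪x, l.sum⟫) :
    ∃ q ∈ l, 0 < ⟪x, q⟫ := by
  refine List.exists_lt_of_sum_lt (fun _ => 0) (fun q => ⟪x, q⟫) ?_
  simpa only [List.map_const', List.sum_replicate, smul_zero, coe_innerₛₗ_apply] using
    (map_list_sum (innerₛₗ ℝ x) l) ▸ hl

theorem subset_gen {Δ I : Set V} : I ⊆ gen Δ I :=
  Set.subset_iUnion (fun k => idealPow Δ I (k + 1)) 0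

namespace GradedRootSystem

variable {Δ : Set V} {d : V → ℤ} {Pos : Set V}

theorem inner_self_pos (h : GradedRootSystem Δ d Pos) {α : V} (hα : α ∈ Δ) : 0 < ⟪α, α⟫ :=
  real_inner_self_pos.mpr (h.nonzero α hα)

theorem neg_notMem_pos (h : GradedRootSystem Δ d Pos) {x : V} (hx : x ∈ Pos) : -x ∉ Pos :=
  (h.pos_iff x (h.pos_subset hx)).mp hx

theorem neg_mem_pos_of_notMem (h : GradedRootSystem Δ d Pos) {x : V} (hx : x ∈ Δ)
    (hxP : x ∉ Pos) : -x ∈ Pos :=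
  not_not.mp fun hn => hxP ((h.pos_iff x hx).mpr hn)

theorem add_mem_of_inner_neg (h : GradedRootSystem Δ d Pos) {α β : V} (hα : α ∈ Δ) (hβ : β ∈ Δ)
    (hαβ : ⟪α, β⟫ < 0) (hne : α + β ≠ 0) : α + β ∈ Δ := by
  have hA := h.inner_self_pos hα
  have hB := h.inner_self_pos hβ
  have hindep : ¬ ∃ r : ℝ, r ≠ 0 ∧ β = r • α := by
    rintro ⟨r, -, rfl⟩
    rcases h.reduced α hα r hβ with rfl | rfl
    · rw [one_smul] at hαβ; linarith
    · exact hne (by rw [neg_one_smul, add_neg_cancel])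
  have hcs : ⟪α, β⟫ * ⟪α, β⟫ < ⟪α, α⟫ * ⟪β, β⟫ := by
    refine (real_inner_mul_inner_self_le α β).lt_of_ne fun heq => hindep ?_
    refine (norm_inner_eq_norm_iff (h.nonzero α hα) (h.nonzero β hβ)).mp ?_
    rw [real_inner_self_eq_norm_mul_norm, real_inner_self_eq_norm_mul_norm] at heq
    rw [Real.norm_eq_abs, ← mul_self_inj (abs_nonneg _) (by positivity), abs_mul_abs_self, heq]
    ring
  obtain ⟨n, hn⟩ := h.crystallographic α hα β hβ
  obtain ⟨m, hm⟩ := h.crystallographic β hβ α hα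
  -- the Cartan integers `n, m` are negative with `n m = 4 cos² θ < 4`, so one of them is `-1`
  have hn0 : (n : ℝ) < 0 := hn ▸ div_neg_of_neg_of_pos (by rw [real_inner_comm]; linarith) hA
  have hm0 : (m : ℝ) < 0 := hm ▸ div_neg_of_neg_of_pos (by linarith) hB
  have hnm : (n : ℝ) * m < 4 := by
    rw [hn, hm, div_mul_div_comm, div_lt_iff₀ (by positivity), real_inner_comm]
    nlinarith
  have hcases : n = -1 ∨ m = -1 := by
    have : n < 0 := by exact_mod_cast hn0
    have : m < 0 := by exact_mod_cast hm0
    have : n * m < 4 := by exact_mod_cast hnm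
    by_contra! hc
    nlinarith [show n ≤ -2 by omega, show m ≤ -2 by omega]
  rcases hcases with rfl | rfl
  · have := h.reflect_mem α hα β hβ
    rwa [← hn, Int.cast_neg, Int.cast_one, neg_one_smul, sub_neg_eq_add, add_comm] at this
  · have := h.reflect_mem β hβ α hα
    rwa [← hm, Int.cast_neg, Int.cast_one, neg_one_smul, sub_neg_eq_add] at this

theorem sub_mem_or_eq_zero_of_inner_pos (h : GradedRootSystem Δ d Pos) {α β : V} (hα : α ∈ Δ)
    (hβ : β ∈ Δ) (hαβ : 0 < ⟪α, β⟫) : α - β ∈ Δ ∨ α - β = 0 := by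
  rw [or_iff_not_imp_right, sub_eq_add_neg]
  exact h.add_mem_of_inner_neg hα (h.neg_mem β hβ) (by rw [inner_neg_right]; linarith)

theorem sub_mem_or_eq_zero_of_add_eq_add (h : GradedRootSystem Δ d Pos) {γ η δ ε : V}
    (hγ : γ ∈ Δ) (hη : η ∈ Δ) (hδ : δ ∈ Δ) (hε : ε ∈ Δ) (hsum : γ + η = δ + ε)
    (hne : γ + η ≠ 0) : (δ - γ ∈ Δ ∨ δ - γ = 0) ∨ (η - δ ∈ Δ ∨ η - δ = 0) := by
  have hpos : 0 < ⟪δ + ε, γ + η⟫ := hsum ▸ real_inner_self_pos.mpr hne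
  simp only [inner_add_left, inner_add_right] at hpos
  have hεγ : ε - γ = η - δ := by rw [sub_eq_sub_iff_add_eq_add, add_comm ε, add_comm η, hsum]
  have hηε : η - ε = δ - γ := by rw [sub_eq_sub_iff_add_eq_add, add_comm η, hsum]
  rcases (by by_contra! hc; linarith [real_inner_comm δ η, real_inner_comm ε η] :
      0 < ⟪δ, γ⟫ ∨ 0 < ⟪η, δ⟫ ∨ 0 < ⟪ε, γ⟫ ∨ 0 < ⟪η, ε⟫) with hp | hp | hp | hp
  · exact Or.inl (h.sub_mem_or_eq_zero_of_inner_pos hδ hγ hp)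
  · exact Or.inr (h.sub_mem_or_eq_zero_of_inner_pos hη hδ hp)
  · exact Or.inr (hεγ ▸ h.sub_mem_or_eq_zero_of_inner_pos hε hγ hp)
  · exact Or.inl (hηε ▸ h.sub_mem_or_eq_zero_of_inner_pos hη hε hp)

theorem list_sum_ne_zero (h : GradedRootSystem Δ d Pos) {l : List V} (hl : ∀ x ∈ l, x ∈ Pos)
    (hne : l ≠ []) : l.sum ≠ 0 := by
  classical
  induction hlen : l.length using Nat.strong_induction_on generalizing l with
  | _ n ih =>
  obtain _ | ⟨p, t⟩ := l
  · exact absurd rfl hne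
  intro hsum
  rw [List.sum_cons] at hsum
  have hp := hl p List.mem_cons_self
  have hpΔ := h.pos_subset hp
  -- `p` makes an obtuse angle with `t.sum = -p`, hence with some `q ∈ t`; merge `p` and `q`
  obtain ⟨q, hqt, hpq⟩ : ∃ q ∈ t, 0 < ⟪-p, q⟫ := exists_mem_inner_pos_of_inner_sum_pos <| by
    rw [eq_neg_of_add_eq_zero_right hsum, inner_neg_neg]; exact h.inner_self_pos hpΔ
  have hq := hl q (List.mem_cons_of_mem p hqt)
  have hpqΔ : p + q ∈ Δ := by
    refine h.add_mem_of_inner_neg hpΔ (h.pos_subset hq) (by rw [inner_neg_left] at hpq; linarith)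
      fun h0 => h.neg_notMem_pos hp ?_
    rwa [← eq_neg_of_add_eq_zero_right h0]
  have hl' : ∀ x ∈ (p + q) :: t.erase q, x ∈ Pos := by
    simp only [List.mem_cons, forall_eq_or_imp]
    exact ⟨h.pos_add p hp q hq hpqΔ,
      fun x hx => hl x (List.mem_cons_of_mem p (List.mem_of_mem_erase hx))⟩
  refine ih t.length (by simp [← hlen]) hl' (List.cons_ne_nil _ _)
    (by simp [List.length_erase_of_mem hqt, Nat.sub_add_cancel (List.length_pos_of_mem hqt)]) ?_
  rw [List.sum_cons, add_assoc, ← List.sum_cons, ((List.perm_cons_erase hqt).sum_eq).symm, hsum]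

theorem mem_pos_of_list_sum (h : GradedRootSystem Δ d Pos) {l : List V} (hl : ∀ x ∈ l, x ∈ Pos)
    (hΔ : l.sum ∈ Δ) : l.sum ∈ Pos := by
  by_contra hP
  refine h.list_sum_ne_zero (l := -l.sum :: l) ?_ (List.cons_ne_nil _ _) (by simp)
  simpa using ⟨h.neg_mem_pos_of_notMem hΔ hP, hl⟩

theorem list_sum_notMem_simpleRoots (h : GradedRootSystem Δ d Pos) {l : List V}
    (hl : ∀ x ∈ l, x ∈ Pos) (hlen : 2 ≤ l.length) : l.sum ∉ simpleRoots Pos := by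
  classical
  rintro ⟨hβ, hsimple⟩
  obtain ⟨p, hpl, hp⟩ := exists_mem_inner_pos_of_inner_sum_pos (h.inner_self_pos (h.pos_subset hβ))
  have hsplit : l.sum = p + (l.erase p).sum := by
    rw [(List.perm_cons_erase hpl).sum_eq, List.sum_cons]
  have hrest : l.erase p ≠ [] := by
    rw [← List.length_pos_iff, List.length_erase_of_mem hpl]; omega
  have hrestPos : ∀ x ∈ l.erase p, x ∈ Pos := fun x hx => hl x (List.mem_of_mem_erase hx)
  have hdiff : l.sum - p = (l.erase p).sum := by rw [hsplit, add_sub_cancel_left]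
  have hrestΔ : (l.erase p).sum ∈ Δ := by
    rcases h.sub_mem_or_eq_zero_of_inner_pos (h.pos_subset hβ) (h.pos_subset (hl p hpl)) hp
      with hmem | hzero
    · rwa [hdiff] at hmem
    · exact absurd (hdiff ▸ hzero) (h.list_sum_ne_zero hrestPos hrest)
  exact hsimple ⟨p, hl p hpl, _, h.mem_pos_of_list_sum hrestPos hrestΔ, hsplit⟩

theorem eq_zero_of_add_eq_zero (h : GradedRootSystem Δ d Pos) {x y : V}
    (hx : x ∈ AddSubmonoid.closure Pos) (hy : y ∈ AddSubmonoid.closure Pos) (hxy : x + y = 0) :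
    x = 0 := by
  obtain ⟨l, hl, rfl⟩ := AddSubmonoid.exists_list_of_mem_closure hx
  obtain ⟨l', hl', rfl⟩ := AddSubmonoid.exists_list_of_mem_closure hy
  by_contra hne
  refine h.list_sum_ne_zero (l := l ++ l') ?_ ?_ (by rwa [List.sum_append])
  · simpa [or_imp, forall_and] using ⟨hl, hl'⟩
  · rintro h0
    exact hne (by simp [List.append_eq_nil_iff.mp h0])

theorem subset_closure_simpleRoots (h : GradedRootSystem Δ d Pos) {P : Set V} (hP : P.Finite)
    (hPPos : P ⊆ Pos) : P ⊆ AddSubmonoid.closure (simpleRoots P) := by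
  -- induct along `a < b ↔ b - a ∈ ℕ Δ⁺ \ {0}`, a strict order since `ℕ Δ⁺` is pointed
  let r : V → V → Prop := fun a b => b - a ∈ AddSubmonoid.closure Pos ∧ a ≠ b
  have : IsStrictOrder V r :=
    { irrefl := fun a ha => ha.2 rfl
      trans := fun a b c hab hbc => by
        refine ⟨by simpa using add_mem hbc.1 hab.1, ?_⟩
        rintro rfl
        exact hab.2 (sub_eq_zero.mp (h.eq_zero_of_add_eq_zero hab.1 hbc.1 (by abel))).symm }
  have hlt : ∀ {a b}, b ∈ P → r a (a + b) := fun hb =>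
    ⟨by simpa using AddSubmonoid.subset_closure (hPPos hb),
      by simpa using h.nonzero _ (h.pos_subset (hPPos hb))⟩
  intro p hp
  refine (hP.wellFoundedOn (r := r)).induction hp fun q hq ih => ?_
  by_cases hs : q ∈ simpleRoots P
  · exact AddSubmonoid.subset_closure hs
  obtain ⟨a, ha, b, hb, rfl⟩ : ∃ a ∈ P, ∃ b ∈ P, q = a + b := not_not.mp fun hno => hs ⟨hq, hno⟩
  exact add_mem (ih a ha (hlt hb)) (ih b hb (add_comm b a ▸ hlt ha))

theorem pos0_subset_closure_simpleRoots (h : GradedRootSystem Δ d Pos) :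
    pos0 d Pos ⊆ AddSubmonoid.closure (simpleRoots (pos0 d Pos)) :=
  h.subset_closure_simpleRoots (h.finite.subset fun _ hx => h.pos_subset hx.1) fun _ hx => hx.1

theorem weyl_apply_mem (h : GradedRootSystem Δ d Pos) {g : V ≃ₗ[ℝ] V} (hg : g ∈ weyl Δ)
    {α : V} (hα : α ∈ Δ) : g α ∈ Δ := by
  induction hg using Subgroup.closure_induction'' generalizing α with
  | mem g hg =>
    obtain ⟨β, hβ, rfl⟩ := hg
    exact sref_apply β α ▸ h.reflect_mem β hβ α hα
  | inv_mem g hg =>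
    obtain ⟨β, hβ, rfl⟩ := hg
    have : (sref β)⁻¹ α = sref β α := by simp [sref]
    exact this ▸ sref_apply β α ▸ h.reflect_mem β hβ α hα
  | one => exact hα
  | mul g g' _ _ ihg ihg' => exact ihg (ihg' hα)

theorem idealPow_succ_subset_level (h : GradedRootSystem Δ d Pos) {I : Set V}
    (hI : I ⊆ level Δ d 1) (k : ℕ) : idealPow Δ I (k + 1) ⊆ level Δ d (k + 1) := by
  induction k with
  | zero => exact fun x hx => by simpa using hI hx
  | succ k ih =>
    rintro x ⟨hx, a, ha, b, hb, rfl⟩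
    refine ⟨hx, ?_⟩
    rw [h.grade_add a (hI ha).1 b (ih hb).1 hx, (hI ha).2, (ih hb).2]
    push_cast
    ring

theorem one_le_grade_of_mem_gen (h : GradedRootSystem Δ d Pos) {I : Set V}
    (hI : I ⊆ level Δ d 1) {x : V} (hx : x ∈ gen Δ I) : 1 ≤ d x := by
  obtain ⟨k, hk⟩ := Set.mem_iUnion.mp hx
  rw [(h.idealPow_succ_subset_level hI k hk).2]
  omega

theorem mem_of_mem_gen_of_grade_eq_one (h : GradedRootSystem Δ d Pos) {I : Set V}
    (hI : I ⊆ level Δ d 1) {x : V} (hx : x ∈ gen Δ I) (hdx : d x = 1) : x ∈ I := by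
  obtain ⟨k, hk⟩ := Set.mem_iUnion.mp hx
  obtain rfl : k = 0 := by have := (h.idealPow_succ_subset_level hI k hk).2; omega
  exact hk

theorem neg_mem_pos0_of_add_mem_of_maximal (h : GradedRootSystem Δ d Pos) {I : Set V} {γ τ : V}
    (hmax : ∀ ν ∈ I, leLevel d Pos γ ν → ν = γ) (hτ : τ ∈ Δ) (hdτ : d τ = 0)
    (hγτ : γ + τ ∈ I) : -τ ∈ pos0 d Pos := by
  refine ⟨h.neg_mem_pos_of_notMem hτ fun hτP => h.nonzero τ hτ ?_,
    by rw [h.grade_neg τ hτ, hdτ, neg_zero]⟩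
  have hle : leLevel d Pos γ (γ + τ) := by
    rw [leLevel, add_sub_cancel_left]
    exact h.pos0_subset_closure_simpleRoots ⟨hτP, hdτ⟩
  simpa using hmax _ hγτ hle

theorem apply_notMem_pos_of_add_mem_idealPow (h : GradedRootSystem Δ d Pos) {I : Set V}
    (hI : I ⊆ level Δ d 1) {w : V ≃ₗ[ℝ] V} (hw : w ∈ W0 Δ d Pos) (hN : invSet Pos w = gen Δ I)
    {γ : V} (hγ : γ ∈ I) (hmax : ∀ ν ∈ I, leLevel d Pos γ ν → ν = γ) (k : ℕ) {η : V}
    (hη : η ∈ Δ) (hγη : γ + η ∈ idealPow Δ I (k + 1)) : w η ∉ Pos := by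
  have hneg : ∀ x ∈ gen Δ I, -(w x) ∈ Pos := fun x hx => (hN ▸ hx : x ∈ invSet Pos w).2
  obtain ⟨hγΔ, hdγ⟩ := hI hγ
  intro hwη
  induction k generalizing η with
  | zero =>
    have hdη : d η = 0 := by
      have := h.grade_add γ hγΔ η hη (hI hγη).1
      rw [(hI hγη).2, hdγ] at this
      omega
    have := hw.2 _ (h.neg_mem_pos0_of_add_mem_of_maximal hmax hη hdη hγη)
    exact h.neg_notMem_pos hwη (by rwa [map_neg] at this)
  | succ k ih =>
    obtain ⟨hγηΔ, δ, hδ, ε, hε, hsum⟩ := hγη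
    have hδΔ := (hI hδ).1
    have hεΔ := (h.idealPow_succ_subset_level hI k hε).1
    have hwδ := hneg δ (subset_gen hδ)
    have hwε := hneg ε (Set.mem_iUnion_of_mem k hε)
    rcases h.sub_mem_or_eq_zero_of_add_eq_add hγΔ hη hδΔ hεΔ hsum (h.nonzero _ hγηΔ) with
      (hτ | hτ) | (hν | hν)
    · -- `δ - γ ∈ Δ(0)`, and maximality forces `γ - δ ∈ Δ(0)⁺`; then `-w η = -w ε + w (γ - δ)`
      have hdτ : d (δ - γ) = 0 := by
        have := h.grade_add γ hγΔ (δ - γ) hτ (by rwa [add_sub_cancel])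
        rw [add_sub_cancel, (hI hδ).2, hdγ] at this
        omega
      have hτ0 :=
        hw.2 _ (h.neg_mem_pos0_of_add_mem_of_maximal hmax hτ hdτ (by rwa [add_sub_cancel]))
      have hηsplit : -(w η) = -(w ε) + w (-(δ - γ)) := by
        rw [eq_sub_of_add_eq' hsum]
        simp only [map_sub, map_add, map_neg]
        abel
      refine h.neg_notMem_pos hwη ?_
      rw [hηsplit]
      exact h.pos_add _ hwε _ hτ0 (hηsplit ▸ h.neg_mem _ (h.pos_subset hwη))
    · rw [sub_eq_zero] at hτ
      subst hτ
      exact h.neg_notMem_pos hwη (add_left_cancel hsum ▸ hwε)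
    · refine ih hν (by rwa [← add_sub_assoc, hsum, add_sub_cancel_left]) ?_
      have hsplit : w (η - δ) = w η + -(w δ) := by rw [map_sub, sub_eq_add_neg]
      exact hsplit ▸ h.pos_add _ hwη _ hwδ (hsplit ▸ h.weyl_apply_mem hw.1 hν)
    · rw [sub_eq_zero] at hν
      subst hν
      exact h.neg_notMem_pos hwη hwδ

theorem ne_add_of_maximal (h : GradedRootSystem Δ d Pos) {I : Set V} (hI : I ⊆ level Δ d 1)
    {w : V ≃ₗ[ℝ] V} (hw : w ∈ W0 Δ d Pos) (hN : invSet Pos w = gen Δ I) {γ : V} (hγ : γ ∈ I)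
    (hmax : ∀ ν ∈ I, leLevel d Pos γ ν → ν = γ) {u v : V} (hu : u ∈ Pos) (hwu : -(w u) ∈ Pos)
    (hv : v ∈ Δ) (hwv : -(w v) ∈ Pos) : γ ≠ u + v := by
  rintro rfl
  have hugen : u ∈ gen Δ I := hN ▸ (⟨hu, hwu⟩ : u ∈ invSet Pos w)
  by_cases hvP : v ∈ Pos
  · have hvgen : v ∈ gen Δ I := hN ▸ (⟨hvP, hwv⟩ : v ∈ invSet Pos w)
    have := h.grade_add u (h.pos_subset hu) v hv (hI hγ).1
    linarith [(hI hγ).2, h.one_le_grade_of_mem_gen hI hugen, h.one_le_grade_of_mem_gen hI hvgen]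
  · obtain ⟨k, hk⟩ := Set.mem_iUnion.mp hugen
    refine h.apply_notMem_pos_of_add_mem_idealPow hI hw hN hγ hmax k (h.neg_mem v hv)
      (by rwa [add_neg_cancel_right]) ?_
    rwa [map_neg]

theorem neg_apply_mem_simpleRoots_of_maximal (h : GradedRootSystem Δ d Pos) {I : Set V}
    (hI : I ⊆ level Δ d 1) {w : V ≃ₗ[ℝ] V} (hw : w ∈ W0 Δ d Pos) (hN : invSet Pos w = gen Δ I)
    {γ : V} (hγ : γ ∈ I) (hmax : ∀ ν ∈ I, leLevel d Pos γ ν → ν = γ) :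
    -(w γ) ∈ simpleRoots Pos := by
  obtain ⟨hγP, hwγ⟩ : γ ∈ invSet Pos w := hN ▸ subset_gen hγ
  refine ⟨hwγ, ?_⟩
  rintro ⟨a, ha, b, hb, hab⟩
  have hsplit : γ = -(w.symm a) + -(w.symm b) := w.injective <| by
    rw [map_add, map_neg, map_neg, w.apply_symm_apply, w.apply_symm_apply, ← neg_add, ← hab,
      neg_neg]
  have hΔ : ∀ x ∈ Pos, -(w.symm x) ∈ Δ := fun x hx =>
    h.neg_mem _ (h.weyl_apply_mem (inv_mem hw.1) (h.pos_subset hx))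
  have hwa : -(w (-(w.symm a))) ∈ Pos := by simpa using ha
  have hwb : -(w (-(w.symm b))) ∈ Pos := by simpa using hb
  by_cases hu : -(w.symm a) ∈ Pos
  · exact h.ne_add_of_maximal hI hw hN hγ hmax hu hwa (hΔ b hb) hwb hsplit
  by_cases hv : -(w.symm b) ∈ Pos
  · exact h.ne_add_of_maximal hI hw hN hγ hmax hv hwb (hΔ a ha) hwa (add_comm (G := V) _ _ ▸ hsplit)
  have hnegγ : -γ = -(-(w.symm a)) + -(-(w.symm b)) := by rw [hsplit, neg_add]
  refine h.neg_notMem_pos hγP (hnegγ ▸ h.pos_add _ (h.neg_mem_pos_of_notMem (hΔ a ha) hu) _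
    (h.neg_mem_pos_of_notMem (hΔ b hb) hv) (hnegγ ▸ h.neg_mem γ (h.pos_subset hγP)))

theorem maximal_of_neg_apply_mem_simpleRoots (h : GradedRootSystem Δ d Pos) {I : Set V}
    (hI : I ⊆ level Δ d 1) {w : V ≃ₗ[ℝ] V} (hw : w ∈ W0 Δ d Pos) (hN : invSet Pos w = gen Δ I)
    {γ : V} (hγ : γ ∈ level Δ d 1) (hs : -(w γ) ∈ simpleRoots Pos) :
    γ ∈ I ∧ ∀ ν ∈ I, leLevel d Pos γ ν → ν = γ := by
  have hγgen : γ ∈ gen Δ I := hN ▸ (⟨h.compatible γ hγ.1 hγ.2.ge, hs.1⟩ : γ ∈ invSet Pos w)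
  refine ⟨h.mem_of_mem_gen_of_grade_eq_one hI hγgen hγ.2, fun ν hν hle => ?_⟩
  obtain ⟨l, hl, hsum⟩ := AddSubmonoid.exists_list_of_mem_closure hle
  by_contra hne
  have hlne : l ≠ [] := by
    rintro rfl
    exact hne (sub_eq_zero.mp hsum.symm)
  -- `-w γ = -w ν + w (ν - γ)` would be a sum of at least two positive roots
  have hwν : -(w ν) ∈ Pos := (hN ▸ subset_gen hν : ν ∈ invSet Pos w).2
  refine h.list_sum_notMem_simpleRoots (l := -(w ν) :: l.map w) ?_ ?_ ?_
  · simp only [List.mem_cons, List.mem_map, forall_eq_or_imp, forall_exists_index, and_imp,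
      forall_apply_eq_imp_iff₂]
    exact ⟨hwν, fun σ hσ => hw.2 σ (hl σ hσ).1⟩
  · simpa [Nat.one_le_iff_ne_zero] using hlne
  · have : (-(w ν) :: l.map w).sum = -(w γ) := by
      rw [List.sum_cons, ← map_list_sum, hsum, map_sub]
      abel
    exact this ▸ hs

end GradedRootSystem

/-- If `w = w_{I,min}` (the element of `W⁰` with `N(w) = ⟨I⟩`), then for `γ ∈ Δ(1)`,
`γ` is a maximal element of `I` iff `w(γ) ∈ -Π`. -/
theorem stmt7 (Δ : Set V) (d : V → ℤ) (Pos : Set V)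
    (h : GradedRootSystem Δ d Pos) (I : Set V)
    (hI : IsLowerIdeal Δ d Pos 1 I)
    (w : V ≃ₗ[ℝ] V) (hw : w ∈ W0 Δ d Pos) (hN : invSet Pos w = gen Δ I) :
    ∀ γ ∈ level Δ d 1,
      ((γ ∈ I ∧ ∀ ν ∈ I, leLevel d Pos γ ν → ν = γ) ↔ -(w γ) ∈ simpleRoots Pos) :=
  fun _ hγ => ⟨fun ⟨hγI, hmax⟩ => h.neg_apply_mem_simpleRoots_of_maximal hI.1 hw hN hγI hmax,
    h.maximal_of_neg_apply_mem_simpleRoots hI.1 hw hN hγ⟩
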